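/- Let f : [0,∞) → [0,∞) be continuous, let a : [0,1] → [0,∞) be continuous with α = ∫₀¹ a(t) dt satisfying 0 < α < 1, and define (Au)(t) = ∫₀¹ ( G(t,s) + (1/(1-α)) ∫₀¹ a(τ) G(τ,s) dτ ) f(u(s)) ds. Suppose ε > 0 satisfies ε/(6(1−α)) ≤ 1 and ρ₁ > 0 is such that f(v) ≤ ε v for all v with 0 < v ≤ ρ₁. Then for every continuous nonnegative u : [0,1] → ℝ with ‖u‖ = ρ₁ (sup norm), one has ‖Au‖ ≤ ‖u‖. -/
import Mathlib

open Set MeasureTheory intervalIntegral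

/-- The Green's function of the fourth-order problem. -/
noncomputable def G (t s : ℝ) : ℝ :=
  if s ≤ t then (t ^ 3 * (1 - s) ^ 2 - (t - s) ^ 3) / 6
  else t ^ 3 * (1 - s) ^ 2 / 6

/-- The sup norm on `[0,1]` of a function `u : ℝ → ℝ`. -/
noncomputable def supNorm (u : ℝ → ℝ) : ℝ := ⨆ t : Set.Icc (0 : ℝ) 1, |u t|

lemma G_cont : Continuous (Function.uncurry G) := by
  apply Continuous.if_le (by fun_prop) (by fun_prop) continuous_snd continuous_fst
  intro ⟨t, s⟩ h
  simp only [Function.uncurry] at *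
  rw [h]
  ring

lemma G_cont_left (s : ℝ) : Continuous fun t => G t s :=
  G_cont.comp (continuous_id.prodMk continuous_const)

lemma G_cont_right (t : ℝ) : Continuous fun s => G t s :=
  G_cont.comp (continuous_const.prodMk continuous_id)

lemma G_nonneg {t s : ℝ} (ht : t ∈ Icc (0:ℝ) 1) (hs : s ∈ Icc (0:ℝ) 1) : 0 ≤ G t s := by
  obtain ⟨ht0, ht1⟩ := ht; obtain ⟨hs0, hs1⟩ := hs
  unfold G
  split_ifs with h
  · have h1 : t - s ≤ t * (1 - s) := by nlinarith
    have h2 : (t - s) ^ 3 ≤ (t * (1 - s)) ^ 3 :=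
      pow_le_pow_left₀ (by linarith) h1 3
    have h3 : (t * (1 - s)) ^ 3 = t ^ 3 * (1 - s) ^ 2 * (1 - s) := by ring
    have h4 : t ^ 3 * (1 - s) ^ 2 * (1 - s) ≤ t ^ 3 * (1 - s) ^ 2 * 1 := by
      apply mul_le_mul_of_nonneg_left (by linarith)
      positivity
    nlinarith
  · positivity

lemma G_le {t s : ℝ} (ht : t ∈ Icc (0:ℝ) 1) (hs : s ∈ Icc (0:ℝ) 1) : G t s ≤ 1 / 6 := by
  obtain ⟨ht0, ht1⟩ := ht; obtain ⟨hs0, hs1⟩ := hs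
  have h3 : t ^ 3 ≤ 1 := pow_le_one₀ ht0 ht1
  have h4 : (1 - s) ^ 2 ≤ 1 := by nlinarith
  unfold G
  split_ifs with h
  · nlinarith [pow_nonneg (sub_nonneg.2 h) 3, pow_nonneg ht0 3]
  · nlinarith [pow_nonneg ht0 3]

lemma le_supNorm {u : ℝ → ℝ} (hu : ContinuousOn u (Icc 0 1)) {t : ℝ}
    (ht : t ∈ Icc (0:ℝ) 1) : u t ≤ supNorm u := by
  have hb : BddAbove (Set.range fun t : Icc (0:ℝ) 1 => |u t|) := by
    rw [← Set.image_univ]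
    apply (isCompact_iff_isCompact_univ.mp isCompact_Icc).bddAbove_image
    exact (hu.abs.comp continuous_subtype_val.continuousOn (fun x _ => x.2)).mono
      (subset_univ _)
  exact (le_abs_self _).trans (le_ciSup hb ⟨t, ht⟩)

theorem stmt_14 (f a : ℝ → ℝ)
    (hf : ContinuousOn f (Set.Ici 0))
    (hf0 : ∀ v ∈ Set.Ici (0 : ℝ), 0 ≤ f v)
    (ha : ContinuousOn a (Set.Icc 0 1))
    (ha0 : ∀ t ∈ Set.Icc (0 : ℝ) 1, 0 ≤ a t)
    (hα0 : 0 < ∫ t in (0 : ℝ)..1, a t)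
    (hα1 : (∫ t in (0 : ℝ)..1, a t) < 1)
    (ε ρ₁ : ℝ) (hε : 0 < ε)
    (hεle : ε / (6 * (1 - ∫ t in (0 : ℝ)..1, a t)) ≤ 1)
    (hρ₁ : 0 < ρ₁)
    (hfε : ∀ v : ℝ, 0 < v → v ≤ ρ₁ → f v ≤ ε * v)
    (u Au : ℝ → ℝ)
    (hu : ContinuousOn u (Set.Icc 0 1))
    (hu0 : ∀ t ∈ Set.Icc (0 : ℝ) 1, 0 ≤ u t)
    (hunorm : supNorm u = ρ₁)
    (hAu : ∀ t, Au t = ∫ s in (0 : ℝ)..1,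
      (G t s + (1 / (1 - ∫ τ in (0 : ℝ)..1, a τ)) *
        ∫ τ in (0 : ℝ)..1, a τ * G τ s) * f (u s)) :
    supNorm Au ≤ supNorm u := by
  set α : ℝ := ∫ t in (0 : ℝ)..1, a t with hα
  have h1α : 0 < 1 - α := by linarith
  set c : ℝ := 1 / (1 - α) with hc
  have hc0 : 0 ≤ c := by positivity
  -- f(0) ≤ 0, hence f(v) ≤ ε * ρ₁ for 0 ≤ v ≤ ρ₁
  have hf00 : f 0 ≤ 0 := by
    have h1 : Filter.Tendsto f (nhdsWithin 0 (Ioi 0)) (nhds (f 0)) :=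
      (hf 0 (le_refl (0:ℝ))).tendsto.mono_left (nhdsWithin_mono _ Ioi_subset_Ici_self)
    have h2 : Filter.Tendsto (fun v : ℝ => ε * v) (nhdsWithin 0 (Ioi 0)) (nhds 0) := by
      have := ((continuous_mul_left ε).tendsto 0).mono_left
        (nhdsWithin_le_nhds (s := Ioi (0:ℝ)))
      simpa using this
    refine le_of_tendsto_of_tendsto h1 h2 ?_
    filter_upwards [Ioo_mem_nhdsGT_of_mem (Set.mem_Ico.2 ⟨le_refl _, hρ₁⟩)] with v hv
    exact hfε v hv.1 hv.2.le
  have hfle : ∀ v : ℝ, 0 ≤ v → v ≤ ρ₁ → f v ≤ ε * ρ₁ := by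
    intro v hv0 hv1
    rcases eq_or_lt_of_le hv0 with h | h
    · calc f v = f 0 := by rw [h]
        _ ≤ 0 := hf00
        _ ≤ ε * ρ₁ := by positivity
    · exact (hfε v h hv1).trans (by nlinarith)
  -- a extended continuously
  set a' : ℝ → ℝ := Set.IccExtend zero_le_one ((Icc (0:ℝ) 1).restrict a) with ha'
  have ha'c : Continuous a' := (ha.restrict).Icc_extend'
  have ha'eq : ∀ τ ∈ Icc (0:ℝ) 1, a' τ = a τ := fun τ hτ => by
    rw [ha', Set.IccExtend_of_mem _ _ hτ]; rfl
  -- the inner integral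
  set Ia : ℝ → ℝ := fun s => ∫ τ in (0:ℝ)..1, a τ * G τ s with hIa
  have hIaeq : Ia = fun s => ∫ τ in (0:ℝ)..1, a' τ * G τ s := by
    funext s
    apply intervalIntegral.integral_congr
    intro τ hτ
    rw [Set.uIcc_of_le zero_le_one] at hτ
    show a τ * G τ s = a' τ * G τ s
    rw [ha'eq τ hτ]
  have hIacont : Continuous Ia := by
    rw [hIaeq]
    exact intervalIntegral.continuous_parametric_intervalIntegral_of_continuous'
      (f := fun s τ => a' τ * G τ s)
      ((ha'c.comp continuous_snd).mul
        (G_cont.comp (continuous_snd.prodMk continuous_fst))) 0 1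
  have haInt : IntervalIntegrable a volume 0 1 := by
    apply ContinuousOn.intervalIntegrable
    rwa [Set.uIcc_of_le zero_le_one]
  have hIaInt : ∀ s, IntervalIntegrable (fun τ => a τ * G τ s) volume 0 1 := by
    intro s
    apply ContinuousOn.intervalIntegrable
    rw [Set.uIcc_of_le zero_le_one]
    exact ha.mul (G_cont_left s).continuousOn
  have hIa_nonneg : ∀ s ∈ Icc (0:ℝ) 1, 0 ≤ Ia s := by
    intro s hs
    apply intervalIntegral.integral_nonneg zero_le_one
    intro τ hτ
    exact mul_nonneg (ha0 τ hτ) (G_nonneg hτ hs)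
  have hIa_le : ∀ s ∈ Icc (0:ℝ) 1, Ia s ≤ α / 6 := by
    intro s hs
    have : Ia s ≤ ∫ τ in (0:ℝ)..1, a τ * (1/6) := by
      apply intervalIntegral.integral_mono_on zero_le_one (hIaInt s)
        ((haInt.mul_const _))
      intro τ hτ
      exact mul_le_mul_of_nonneg_left (G_le hτ hs) (ha0 τ hτ)
    rwa [intervalIntegral.integral_mul_const, ← hα, mul_one_div] at this
  -- pointwise bounds on u and f ∘ u
  have hu_le : ∀ s ∈ Icc (0:ℝ) 1, u s ≤ ρ₁ := fun s hs => hunorm ▸ le_supNorm hu hs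
  have hfu : ∀ s ∈ Icc (0:ℝ) 1, 0 ≤ f (u s) ∧ f (u s) ≤ ε * ρ₁ := by
    intro s hs
    exact ⟨hf0 _ (hu0 s hs), hfle _ (hu0 s hs) (hu_le s hs)⟩
  -- the kernel bound
  set M : ℝ := (1/6 + c * (α/6)) * (ε * ρ₁) with hM
  have key : ∀ t ∈ Icc (0:ℝ) 1, 0 ≤ Au t ∧ Au t ≤ M := by
    intro t ht
    have hKnn : ∀ s ∈ Icc (0:ℝ) 1, 0 ≤ (G t s + c * Ia s) * f (u s) := by
      intro s hs
      exact mul_nonneg (add_nonneg (G_nonneg ht hs)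
        (mul_nonneg hc0 (hIa_nonneg s hs))) (hfu s hs).1
    have hKle : ∀ s ∈ Icc (0:ℝ) 1, (G t s + c * Ia s) * f (u s) ≤ M := by
      intro s hs
      have h1 : G t s + c * Ia s ≤ 1/6 + c * (α/6) := by
        have := hIa_le s hs
        have := G_le ht hs
        nlinarith [hIa_nonneg s hs]
      have h2 : 0 ≤ G t s + c * Ia s :=
        add_nonneg (G_nonneg ht hs) (mul_nonneg hc0 (hIa_nonneg s hs))
      calc (G t s + c * Ia s) * f (u s) ≤ (1/6 + c * (α/6)) * f (u s) :=
            mul_le_mul_of_nonneg_right h1 (hfu s hs).1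
        _ ≤ (1/6 + c * (α/6)) * (ε * ρ₁) := by
            apply mul_le_mul_of_nonneg_left (hfu s hs).2
            positivity
    have hKint : IntervalIntegrable (fun s => (G t s + c * Ia s) * f (u s)) volume 0 1 := by
      apply ContinuousOn.intervalIntegrable
      rw [Set.uIcc_of_le zero_le_one]
      exact (((G_cont_right t).continuousOn).add
        (continuousOn_const.mul hIacont.continuousOn)).mul
        (hf.comp hu (fun s hs => hu0 s hs))
    rw [hAu t]
    constructor
    · exact intervalIntegral.integral_nonneg zero_le_one hKnn
    · calc (∫ s in (0:ℝ)..1, (G t s + c * Ia s) * f (u s))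
          ≤ ∫ _s in (0:ℝ)..1, M :=
            intervalIntegral.integral_mono_on zero_le_one hKint
              intervalIntegrable_const hKle
        _ = M := by rw [intervalIntegral.integral_const]; simp [hM]
  have hM_le : M ≤ ρ₁ := by
    have hε6 : ε ≤ 6 * (1 - α) := by
      rwa [div_le_one (by positivity)] at hεle
    have h7 : (1/6 + (1/(1-α)) * (α/6)) = 1/(6*(1-α)) := by
      field_simp
      ring
    rw [hM, hc, h7, div_mul_eq_mul_div, one_mul, div_le_iff₀ (by positivity)]
    nlinarith
  have : Nonempty (Icc (0:ℝ) 1) := ⟨⟨0, by norm_num⟩⟩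
  rw [hunorm, supNorm]
  apply ciSup_le
  rintro ⟨t, ht⟩
  rw [abs_of_nonneg (key t ht).1]
  exact (key t ht).2.trans hM_le
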